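/- arXiv:2605.13640 — 5 statements merged into one kernel-verified Lean document; each statement's English description precedes it below -/
import Mathlib

section
/- If the inequality m^{1+κ} · ∏_{j=1}^{d-1} ⟨θ_j m⟩ ≥ c(κ) holds for all positive integers m (with c(κ) > 0), then the dyadic minimum μ(L) of the lattice Λ_θ satisfies μ(L) > c₁(κ) · 2^{|L|₁/(κ+1)} for all L ∈ ℤ_{≥0}^{d-1}, where c₁(κ) = (c(κ)·2^{d-1})^{1/(1+κ)} and |L|₁ = l₁ + ⋯ + l_{d-1}. -/
/-!
If `q ≠ 0` is admissible for the cylinder of `L`, i.e. `⟨θ_j q⟩ ≤ 2^(-l_j-1)` for all `j`, then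
each `⟨θ_j q⟩` is irrational and hence strictly below its dyadic threshold, so applying the
hypothesis to `m = |q|` gives `c < |q|^(1+κ) 2^(-|L|₁-n)`, i.e. `c₁ 2^(|L|₁/(κ+1)) < |q|`.
Since admissible `|q|` are integers, the strict bound survives taking the infimum, provided
the admissible set is nonempty (otherwise `sInf` is `0`); nonemptiness is simultaneous
Dirichlet approximation, proved by compactness of `[0,1]^n`.
-/

open scoped BigOperators

/-- Distance from a real number to the nearest integer. -/
noncomputable def distInt (x : ℝ) : ℝ := |x - round x|

/-- The dyadic minimum `μ(L)` of the lattice `Λ_θ`: the infimum of `|m_d|` over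
nonzero `m_d ∈ ℤ` such that the lattice point `(θ₁ m_d - m₁, …, θ_n m_d - m_n, m_d)`
can be chosen (for suitable `m_j`) with `|θ_j m_d - m_j| ≤ 2^{-l_j-1}` for all `j`. -/
noncomputable def dyadicMin (n : ℕ) (θ : Fin n → ℝ) (L : Fin n → ℕ) : ℝ :=
  sInf {t : ℝ | ∃ md : ℤ, md ≠ 0 ∧
    (∀ j, distInt (θ j * md) ≤ (2 : ℝ) ^ (-(L j : ℝ) - 1)) ∧ t = |(md : ℝ)|}

lemma distInt_le_abs_sub_intCast (x : ℝ) (k : ℤ) : distInt x ≤ |x - k| :=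
  round_le x k

lemma distInt_neg (x : ℝ) : distInt (-x) = distInt x := by
  have key : ∀ y : ℝ, distInt (-y) ≤ distInt y := fun y => by
    have h := distInt_le_abs_sub_intCast (-y) (-round y)
    rwa [Int.cast_neg, sub_neg_eq_add, neg_add_eq_sub, abs_sub_comm] at h
  exact le_antisymm (key x) (by simpa using key (-x))

lemma distInt_mul_natAbs (x : ℝ) (k : ℤ) : distInt (x * k.natAbs) = distInt (x * k) := by
  rw [Nat.cast_natAbs, Int.cast_abs]
  rcases abs_choice (k : ℝ) with h | h <;> simp only [h, mul_neg, distInt_neg]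

lemma irrational_distInt {x : ℝ} (hx : Irrational x) : Irrational (distInt x) := by
  unfold distInt
  rcases abs_choice (x - round x) with h | h <;> rw [h]
  · exact hx.sub_intCast _
  · exact (hx.sub_intCast _).neg

lemma distInt_pos_of_irrational {x : ℝ} (hx : Irrational x) : 0 < distInt x :=
  (abs_nonneg _).lt_of_ne (irrational_distInt hx).ne_zero.symm

lemma two_rpow_neg_natCast_sub_one_eq_ratCast (l : ℕ) :
    (2 : ℝ) ^ (-(l : ℝ) - 1) = (((2 : ℚ) ^ (-(l : ℤ) - 1) : ℚ) : ℝ) := by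
  rw [Rat.cast_zpow, Rat.cast_ofNat, ← Real.rpow_intCast]
  push_cast
  rfl

lemma Irrational.lt_two_rpow_neg_natCast_sub_one {y : ℝ} (hy : Irrational y) {l : ℕ}
    (h : y ≤ (2 : ℝ) ^ (-(l : ℝ) - 1)) : y < (2 : ℝ) ^ (-(l : ℝ) - 1) :=
  h.lt_of_ne (two_rpow_neg_natCast_sub_one_eq_ratCast l ▸ hy.ne_rat _)

lemma prod_two_rpow_neg_natCast_sub_one {ι : Type*} [Fintype ι] (L : ι → ℕ) :
    ∏ j, (2 : ℝ) ^ (-(L j : ℝ) - 1) = (2 : ℝ) ^ (-(∑ j, (L j : ℝ)) - Fintype.card ι) := by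
  rw [← Real.rpow_sum_of_pos two_pos, Finset.sum_sub_distrib, Finset.sum_neg_distrib]
  simp

lemma exists_lt_dist_lt_of_isCompact {α : Type*} [PseudoMetricSpace α] {s : Set α}
    (hs : IsCompact s) {u : ℕ → α} (hu : ∀ k, u k ∈ s) {ε : ℝ} (hε : 0 < ε) :
    ∃ a b, a < b ∧ dist (u b) (u a) < ε := by
  obtain ⟨_, _, φ, hφ, hlim⟩ := hs.tendsto_subseq hu
  obtain ⟨N, hN⟩ := Metric.cauchySeq_iff'.1 hlim.cauchySeq ε hε
  exact ⟨φ N, φ (N + 1), hφ N.lt_succ_self, hN (N + 1) N.le_succ⟩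

lemma exists_ne_zero_forall_distInt_mul_lt {ι : Type*} [Fintype ι] (θ : ι → ℝ) {ε : ℝ}
    (hε : 0 < ε) : ∃ q : ℤ, q ≠ 0 ∧ ∀ j, distInt (θ j * q) < ε := by
  set u : ℕ → ι → ℝ := fun k j => Int.fract (θ j * k)
  have hu : ∀ k, u k ∈ Set.Icc 0 1 := fun k =>
    ⟨fun j => Int.fract_nonneg _, fun j => (Int.fract_lt_one _).le⟩
  obtain ⟨a, b, hab, hdist⟩ := exists_lt_dist_lt_of_isCompact isCompact_Icc hu hε
  refine ⟨b - a, by omega, fun j => ?_⟩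
  calc distInt (θ j * ((b - a : ℤ) : ℝ))
      ≤ |θ j * ((b - a : ℤ) : ℝ) - ((⌊θ j * b⌋ - ⌊θ j * a⌋ : ℤ) : ℝ)| :=
        distInt_le_abs_sub_intCast _ _
    _ = dist (u b j) (u a j) := by
        simp only [u, Int.fract, Real.dist_eq]
        push_cast
        ring_nf
    _ ≤ dist (u b) (u a) := dist_le_pi_dist _ _ j
    _ < ε := hdist

lemma lt_csInf_of_forall_intCast_lt {T : Set ℝ} {B : ℝ} (hT : T.Nonempty)
    (h : ∀ t ∈ T, ∃ k : ℤ, t = k ∧ B < k) : B < sInf T := by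
  refine (Int.lt_floor_add_one B).trans_le (le_csInf hT fun t ht => ?_)
  obtain ⟨k, rfl, hk⟩ := h t ht
  exact_mod_cast Int.floor_lt.2 hk

lemma mul_rpow_mul_two_rpow_lt {c κ S n m : ℝ} (hc : 0 < c) (hκ : 0 < 1 + κ) (hm : 0 ≤ m)
    (h : c < m ^ (1 + κ) * (2 : ℝ) ^ (-S - n)) :
    (c * 2 ^ n) ^ (1 / (1 + κ)) * 2 ^ (S / (κ + 1)) < m := by
  have hsplit : (2 : ℝ) ^ (-S - n) = ((2 : ℝ) ^ n * 2 ^ S)⁻¹ := by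
    rw [← Real.rpow_add two_pos, ← Real.rpow_neg zero_le_two]
    ring_nf
  have hlt : c * 2 ^ n * 2 ^ S < m ^ (1 + κ) := by
    rw [hsplit, ← div_eq_mul_inv, lt_div_iff₀ (by positivity)] at h
    linarith
  have hrw : (c * 2 ^ n) ^ (1 / (1 + κ)) * (2 : ℝ) ^ (S / (κ + 1))
      = (c * 2 ^ n * 2 ^ S) ^ (1 + κ)⁻¹ := by
    rw [one_div, div_eq_mul_inv, add_comm κ, Real.rpow_mul zero_le_two,
      ← Real.mul_rpow (by positivity) (by positivity)]
  rw [hrw, Real.rpow_inv_lt_iff_of_pos (by positivity) hm hκ]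
  exact hlt

lemma exists_ne_zero_forall_distInt_mul_le_two_rpow {ι : Type*} [Fintype ι] (θ : ι → ℝ)
    (L : ι → ℕ) : ∃ q : ℤ, q ≠ 0 ∧ ∀ j, distInt (θ j * q) ≤ (2 : ℝ) ^ (-(L j : ℝ) - 1) := by
  obtain ⟨q, hq, hlt⟩ :=
    exists_ne_zero_forall_distInt_mul_lt θ (Real.rpow_pos_of_pos two_pos (-(∑ j, (L j : ℝ)) - 1))
  refine ⟨q, hq, fun j => (hlt j).le.trans (Real.rpow_le_rpow_of_exponent_le one_le_two ?_)⟩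
  have : (L j : ℝ) ≤ ∑ j, (L j : ℝ) :=
    Finset.single_le_sum (fun i _ => Nat.cast_nonneg (L i)) (Finset.mem_univ j)
  linarith

lemma lt_abs_of_forall_distInt_mul_le {ι : Type*} [Fintype ι] [Nonempty ι] {θ : ι → ℝ}
    (hθ : ∀ j, Irrational (θ j)) {κ c : ℝ} (hκ : 0 < 1 + κ) (hc : 0 < c)
    (happrox : ∀ m : ℕ, 0 < m → c ≤ (m : ℝ) ^ (1 + κ) * ∏ j, distInt (θ j * m))
    {L : ι → ℕ} {q : ℤ} (hq : q ≠ 0)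
    (hL : ∀ j, distInt (θ j * q) ≤ (2 : ℝ) ^ (-(L j : ℝ) - 1)) :
    (c * 2 ^ (Fintype.card ι : ℝ)) ^ (1 / (1 + κ)) * 2 ^ ((∑ j, (L j : ℝ)) / (κ + 1))
      < |(q : ℝ)| := by
  have hirr : ∀ j, Irrational (θ j * q) := fun j => mul_comm (q : ℝ) (θ j) ▸ (hθ j).intCast_mul hq
  have hprod : ∏ j, distInt (θ j * q.natAbs) < ∏ j, (2 : ℝ) ^ (-(L j : ℝ) - 1) := by
    refine Finset.prod_lt_prod_of_nonempty (fun j _ => ?_) (fun j _ => ?_) Finset.univ_nonempty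
    · rw [distInt_mul_natAbs]
      exact distInt_pos_of_irrational (hirr j)
    · rw [distInt_mul_natAbs]
      exact (irrational_distInt (hirr j)).lt_two_rpow_neg_natCast_sub_one (hL j)
  rw [prod_two_rpow_neg_natCast_sub_one] at hprod
  have hm : 0 < q.natAbs := Int.natAbs_pos.2 hq
  have hbound := mul_rpow_mul_two_rpow_lt hc hκ q.natAbs.cast_nonneg
    ((happrox _ hm).trans_lt (mul_lt_mul_of_pos_left hprod (by positivity)))
  rwa [Nat.cast_natAbs, Int.cast_abs] at hbound

theorem dyadicMin_lower_bound (n : ℕ) (hn : 1 ≤ n) (θ : Fin n → ℝ)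
    (hθ : ∀ j, Irrational (θ j)) (κ c : ℝ) (hκ : 0 < κ) (hc : 0 < c)
    (happrox : ∀ m : ℕ, 0 < m → c ≤ (m : ℝ) ^ (1 + κ) * ∏ j, distInt (θ j * m)) :
    ∀ L : Fin n → ℕ,
      (c * 2 ^ (n : ℝ)) ^ (1 / (1 + κ)) * 2 ^ ((∑ j, (L j : ℝ)) / (κ + 1))
        < dyadicMin n θ L := by
  intro L
  have : Nonempty (Fin n) := ⟨⟨0, hn⟩⟩
  obtain ⟨q, hq, hqL⟩ := exists_ne_zero_forall_distInt_mul_le_two_rpow θ L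
  refine lt_csInf_of_forall_intCast_lt ⟨_, q, hq, hqL, rfl⟩ ?_
  rintro _ ⟨md, hmd, hle, rfl⟩
  refine ⟨|md|, Int.cast_abs.symm, ?_⟩
  simpa using lt_abs_of_forall_distInt_mul_le hθ (by linarith) hc happrox hmd hle
end

section
/- Let J ⊆ [d−1] and L ∈ Z_J (i.e., l_j > 0 for j ∈ J and l_j = 0 for j ∉ J). Then μ_J(L) = μ(L), where μ_J(L) is the minimum of |x_d| over points x ∈ Λ_θ^♮ lying in the partial cylinder C_J(L) = {x : |x_j| ≤ 2^{−l_j−1} for j ∈ J}, and μ(L) is the minimum over the full cylinder C(L) = {x : |x_j| ≤ 2^{−l_j−1} for all j ∈ [d−1]}. -/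
open scoped BigOperators

/-- The partial dyadic minimum `μ_J(L)` over the partial cylinder `C_J(L)`, where the
constraint `|x_j| ≤ 2^{-l_j-1}` is only imposed for `j ∈ J`. -/
noncomputable def dyadicMinJ (n : ℕ) (θ : Fin n → ℝ) (J : Finset (Fin n))
    (L : Fin n → ℕ) : ℝ :=
  sInf {t : ℝ | ∃ md : ℤ, md ≠ 0 ∧
    (∀ j ∈ J, distInt (θ j * md) ≤ (2 : ℝ) ^ (-(L j : ℝ) - 1)) ∧ t = |(md : ℝ)|}

theorem dyadicMinJ_eq_dyadicMin (n : ℕ) (θ : Fin n → ℝ) (hθ : ∀ j, Irrational (θ j))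
    (J : Finset (Fin n)) (L : Fin n → ℕ)
    (hL : (∀ j ∈ J, 0 < L j) ∧ ∀ j ∉ J, L j = 0) :
    dyadicMinJ n θ J L = dyadicMin n θ L := by
  unfold dyadicMinJ dyadicMin
  congr 1
  ext t
  constructor
  · rintro ⟨md, hmd, h, rfl⟩
    refine ⟨md, hmd, fun j => ?_, rfl⟩
    by_cases hj : j ∈ J
    · exact h j hj
    · rw [hL.2 j hj]
      have h1 : |θ j * md - round (θ j * md)| ≤ 1 / 2 := abs_sub_round _
      have h2 : (2 : ℝ) ^ (-(((0 : ℕ) : ℝ)) - 1) = 1 / 2 := by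
        rw [show (-(((0 : ℕ) : ℝ)) - 1) = -1 by norm_num, Real.rpow_neg_one]
        norm_num
      rw [distInt, h2]
      exact h1
  · rintro ⟨md, hmd, h, rfl⟩
    exact ⟨md, hmd, fun j _ => h j, rfl⟩
end

section
/- For any unimodular lattice Γ ⊂ ℝ^d, A > d, and ν > 0, the elementary lattice sum f_A(ν, Γ, u) = Σ_{x ∈ Γ} (1 + ν|x − u|_∞)^{−A} satisfies sup_u f_A(ν, Γ, u) ≤ c_A (ν^{−d} + λ_d(Γ)^d), with c_A depending only on A and d. -/
open scoped BigOperators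

/-- The lattice in `ℝ^d` generated by the columns of the matrix `B`. -/
def latticePts (d : ℕ) (B : Matrix (Fin d) (Fin d) ℝ) : Set (Fin d → ℝ) :=
  {x | ∃ m : Fin d → ℤ, x = B.mulVec fun i => (m i : ℝ)}

/-- The `k`-th successive minimum of the lattice generated by `B`, for the sup norm. -/
noncomputable def succMin (d : ℕ) (B : Matrix (Fin d) (Fin d) ℝ) (k : ℕ) : ℝ :=
  sInf {t : ℝ | 0 ≤ t ∧ ∃ v : Fin k → (Fin d → ℝ),
    (∀ i, v i ∈ latticePts d B) ∧ LinearIndependent ℝ v ∧ ∀ i, ‖v i‖ ≤ t}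

/-!
If `v₁, …, v_d` are independent vectors of `Γ` of norm at most `t`, every point of `ℝ^d` lies
within `R = ∑ ‖vᵢ‖ ≤ d t` of `Γ`: reduce it modulo the sublattice they span. Integrating the
indicator of `closedBall u (ρ + R)` over a fundamental domain of `Γ`, of volume `|det B| = 1`,
then shows that `Γ` has at most `(2 (ρ + R))^d` points in `closedBall u ρ`. Splitting `Γ` into
the dyadic shells `2^k ≤ 1 + ν ‖x - u‖ < 2^(k+1)` bounds the lattice sum by
`∑ₖ 2^(-k A) ((2^(k+3)/ν)^d + (4 R)^d)`, two geometric series that converge as `A > d`.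
The bound is continuous in `t`, so it also holds at the infimum `λ_d` of the admissible `t`.
-/

open MeasureTheory Set Submodule Metric Module Matrix Finset
open scoped ENNReal

theorem MeasureTheory.IsAddFundamentalDomain.card_mul_measure_le {G α : Type*} [AddGroup G]
    [Countable G] [AddAction G α] [MeasurableSpace α] [MeasurableConstVAdd G α] {μ : Measure α}
    [VAddInvariantMeasure G α μ] {s : Set α} (hs : IsAddFundamentalDomain G s μ) {K : Set α}
    (hK : MeasurableSet K) (T : Finset G) (hT : ∀ x, ∃ g₀ : G, ∀ g ∈ T, (g + g₀) +ᵥ x ∈ K) :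
    T.card * μ s ≤ μ K := by
  have hcount : ∀ x, (T.card : ℝ≥0∞) ≤ ∑' g : G, K.indicator 1 (-g +ᵥ x) := by
    intro x
    obtain ⟨g₀, hg₀⟩ := hT x
    calc (T.card : ℝ≥0∞) = ∑ g ∈ T, K.indicator 1 ((g + g₀) +ᵥ x) := by
          simp [Finset.sum_congr rfl fun g hg => Set.indicator_of_mem (hg₀ g hg) (1 : α → ℝ≥0∞)]
      _ ≤ ∑' g : G, K.indicator 1 ((g + g₀) +ᵥ x) := ENNReal.sum_le_tsum T
      _ = ∑' g : G, K.indicator 1 (-g +ᵥ x) := by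
          simpa using ((Equiv.addRight g₀).trans (Equiv.neg G)).tsum_eq fun g =>
            K.indicator 1 (-g +ᵥ x)
  calc T.card * μ s = ∫⁻ x in s, (T.card : ℝ≥0∞) ∂μ := (setLIntegral_const s _).symm
    _ ≤ ∫⁻ x in s, ∑' g : G, K.indicator 1 (-g +ᵥ x) ∂μ := lintegral_mono hcount
    _ = ∑' g : G, ∫⁻ x in s, K.indicator 1 (-g +ᵥ x) ∂μ :=
        lintegral_tsum fun g =>
          ((measurable_one.indicator hK).comp (measurable_const_vadd _)).aemeasurable
    _ = μ K := by rw [← hs.lintegral_eq_tsum', lintegral_indicator_one hK]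

theorem ZSpan.card_mul_measure_fundamentalDomain_le {E ι : Type*} [NormedAddCommGroup E]
    [NormedSpace ℝ E] [MeasurableSpace E] [BorelSpace E] [Finite ι] (μ : Measure E)
    [μ.IsAddLeftInvariant] (b : Module.Basis ι ℝ E) {R ρ : ℝ}
    (hcov : ∀ x, ∃ γ ∈ span ℤ (range b), ‖x - γ‖ ≤ R) {u : E}
    (T : Finset (span ℤ (range b))) (hT : ∀ γ ∈ T, ‖(γ : E) - u‖ ≤ ρ) :
    T.card * μ (fundamentalDomain b) ≤ μ (closedBall u (ρ + R)) := by
  have : Countable (span ℤ (range b)).toAddSubgroup := inferInstanceAs (Countable (span ℤ _))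
  refine (ZSpan.isAddFundamentalDomain' b μ).card_mul_measure_le measurableSet_closedBall T
    fun x => ?_
  obtain ⟨γ, hγ, hxγ⟩ := hcov (-x)
  refine ⟨⟨γ, hγ⟩, fun g hg => ?_⟩
  rw [mem_closedBall, dist_eq_norm, AddSubgroup.vadd_def, vadd_eq_add]
  calc ‖((g + ⟨γ, hγ⟩ : (span ℤ (range b)).toAddSubgroup) : E) + x - u‖
      = ‖((g : E) - u) + -(-x - γ)‖ := by congr 1; push_cast; abel
    _ ≤ ρ + R := (norm_add_le _ _).trans (add_le_add (hT g hg) (by rwa [norm_neg]))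

theorem Submodule.exists_mem_norm_sub_le_sum_norm {E ι : Type*} [NormedAddCommGroup E]
    [NormedSpace ℝ E] [FiniteDimensional ℝ E] [Fintype ι] {Γ : Submodule ℤ E} {v : ι → E}
    (hv : ∀ i, v i ∈ Γ) (hli : LinearIndependent ℝ v) (hcard : Fintype.card ι = finrank ℝ E)
    (x : E) : ∃ γ ∈ Γ, ‖x - γ‖ ≤ ∑ i, ‖v i‖ := by
  let b := basisOfLinearIndependentOfCardEqFinrank' v hli hcard
  have hspan : span ℤ (range b) ≤ Γ := by
    rw [span_le, coe_basisOfLinearIndependentOfCardEqFinrank']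
    exact range_subset_iff.2 hv
  refine ⟨ZSpan.floor b x, hspan (ZSpan.floor b x).2, ?_⟩
  simpa [b, ← ZSpan.fract_apply] using ZSpan.norm_fract_le b x

theorem Finset.sum_rpow_neg_le_tsum {ι : Type*} (S : Finset ι) {w : ι → ℝ} (hw : ∀ i, 1 ≤ w i)
    {A : ℝ} (hA : 0 ≤ A) {N : ℕ → ℝ} (hN : ∀ k, (#{i ∈ S | w i < 2 ^ (k + 1)} : ℝ) ≤ N k)
    (hsum : Summable fun k => ((2 : ℝ) ^ (-A)) ^ k * N k) :
    ∑ i ∈ S, w i ^ (-A) ≤ ∑' k, ((2 : ℝ) ^ (-A)) ^ k * N k := by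
  classical
  choose k hk using fun i => exists_nat_pow_near (hw i) one_lt_two
  have hterm : ∀ i, w i ^ (-A) ≤ ((2 : ℝ) ^ (-A)) ^ k i := fun i => by
    rw [← Real.rpow_mul_natCast zero_le_two, mul_comm, Real.rpow_natCast_mul zero_le_two]
    exact Real.rpow_le_rpow_of_nonpos (by positivity) (hk i).1 (neg_nonpos.2 hA)
  have hfiber : ∀ j, (#{i ∈ S | k i = j} : ℝ) ≤ N j := fun j =>
    le_trans (by exact_mod_cast card_le_card <|
      monotone_filter_right S fun i _ (h : k i = j) => h ▸ (hk i).2) (hN j)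
  calc ∑ i ∈ S, w i ^ (-A) ≤ ∑ i ∈ S, ((2 : ℝ) ^ (-A)) ^ k i := sum_le_sum fun i _ => hterm i
    _ = ∑ j ∈ S.image k, #{i ∈ S | k i = j} • ((2 : ℝ) ^ (-A)) ^ j := sum_comp _ _
    _ ≤ ∑ j ∈ S.image k, ((2 : ℝ) ^ (-A)) ^ j * N j := sum_le_sum fun j _ => by
        rw [nsmul_eq_mul, mul_comm]
        exact mul_le_mul_of_nonneg_left (hfiber j) (by positivity)
    _ ≤ ∑' j, ((2 : ℝ) ^ (-A)) ^ j * N j := hsum.sum_le_tsum _ fun j _ =>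
        mul_nonneg (by positivity) ((Nat.cast_nonneg _).trans (hN j))

theorem hasSum_geometric_mul_add {r s : ℝ} (hr : 0 ≤ r) (hs : 0 ≤ s) (hrs : r * s < 1)
    (hr1 : r < 1) (a b : ℝ) :
    HasSum (fun k : ℕ => r ^ k * (a * s ^ k + b)) (a * (1 - r * s)⁻¹ + b * (1 - r)⁻¹) := by
  have hsplit : (fun k : ℕ => r ^ k * (a * s ^ k + b)) = fun k => a * (r * s) ^ k + b * r ^ k :=
    funext fun k => by ring
  rw [hsplit]
  exact ((hasSum_geometric_of_lt_one (mul_nonneg hr hs) hrs).mul_left a).add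
    ((hasSum_geometric_of_lt_one hr hr1).mul_left b)

theorem le_apply_csInf_of_forall_le {α β : Type*} [ConditionallyCompleteLinearOrder α]
    [TopologicalSpace α] [OrderTopology α] [Preorder β] [TopologicalSpace β] [OrderClosedTopology β]
    {S : Set α} (hne : S.Nonempty) (hbdd : BddBelow S) {g : α → β} (hg : Continuous g) {a : β}
    (h : ∀ t ∈ S, a ≤ g t) : a ≤ g (sInf S) :=
  (isClosed_le continuous_const hg).closure_subset_iff.2 h (csInf_mem_closure hne hbdd)

theorem one_sub_two_rpow_pos {x : ℝ} (hx : x < 0) : 0 < 1 - (2 : ℝ) ^ x :=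
  sub_pos.2 (Real.rpow_lt_one_of_one_lt_of_neg one_lt_two hx)

noncomputable def latticeSumConst (d : ℕ) (A : ℝ) : ℝ :=
  8 ^ d * (1 - 2 ^ ((d : ℝ) - A))⁻¹ + (4 * d) ^ d * (1 - 2 ^ (-A))⁻¹

theorem latticeSumConst_pos {d : ℕ} {A : ℝ} (hA : (d : ℝ) < A) : 0 < latticeSumConst d A := by
  have h₁ := one_sub_two_rpow_pos (x := d - A) (by linarith)
  have h₂ := one_sub_two_rpow_pos (x := -A) (by linarith [Nat.cast_nonneg (α := ℝ) d])
  unfold latticeSumConst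
  positivity

section Lattice

variable {d : ℕ} {B : Matrix (Fin d) (Fin d) ℝ}

theorem latticePts_eq_span : latticePts d B = span ℤ (range B.col) := by
  ext x
  rw [SetLike.mem_coe, mem_span_range_iff_exists_fun]
  refine exists_congr fun m => ?_
  rw [eq_comm]
  refine Eq.congr_left ?_
  ext i
  simp [Matrix.mulVec, dotProduct, Finset.sum_apply, mul_comm]

theorem isUnit_of_abs_det_eq_one (hB : |B.det| = 1) : IsUnit B :=
  (isUnit_iff_isUnit_det B).2 (isUnit_iff_ne_zero.2 fun h => by simp [h] at hB)

theorem card_le_of_forall_norm_mulVec_sub_le (hB : |B.det| = 1) {R : ℝ}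
    (hcov : ∀ z, ∃ γ ∈ latticePts d B, ‖z - γ‖ ≤ R) {u : Fin d → ℝ} {ρ : ℝ} (hρ : 0 ≤ ρ)
    (S : Finset (Fin d → ℤ)) (hS : ∀ m ∈ S, ‖B *ᵥ (fun i => (m i : ℝ)) - u‖ ≤ ρ) :
    (S.card : ℝ) ≤ (2 * (ρ + R)) ^ d := by
  have hR : 0 ≤ R := (hcov 0).elim fun _ h => (norm_nonneg _).trans h.2
  have hB' := isUnit_of_abs_det_eq_one hB
  let b := basisOfLinearIndependentOfCardEqFinrank' B.col
    (Matrix.linearIndependent_cols_iff_isUnit.2 hB') (by simp)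
  have hspan : (span ℤ (range b) : Set (Fin d → ℝ)) = latticePts d B := by
    simp [b, latticePts_eq_span]
  let f : (Fin d → ℤ) ↪ span ℤ (range b) :=
    ⟨fun m => ⟨B *ᵥ (fun i => (m i : ℝ)), by rw [← SetLike.mem_coe, hspan]; exact ⟨m, rfl⟩⟩,
      fun m m' h => funext fun i => Int.cast_injective (α := ℝ) <|
        congrFun (mulVec_injective_iff_isUnit.2 hB' (congrArg Subtype.val h)) i⟩
  have hcount := ZSpan.card_mul_measure_fundamentalDomain_le volume b (R := R)
    (by simpa [← SetLike.mem_coe, hspan] using hcov) (S.map f) fun γ hγ => by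
      obtain ⟨m, hm, rfl⟩ := Finset.mem_map.1 hγ
      exact hS m hm
  rw [Finset.card_map, ZSpan.volume_fundamentalDomain, Real.volume_pi_closedBall u (by positivity)]
    at hcount
  have hdet : |(Matrix.of ⇑b).det| = 1 := by
    rw [show Matrix.of ⇑b = Bᵀ by ext; simp [b], det_transpose, hB]
  rw [hdet, ENNReal.ofReal_one, mul_one, Fintype.card_fin] at hcount
  simpa using ENNReal.toReal_le_of_le_ofReal (by positivity) hcount

theorem tsum_one_add_mul_norm_rpow_neg_le (hB : |B.det| = 1) {R : ℝ}
    (hcov : ∀ z, ∃ γ ∈ latticePts d B, ‖z - γ‖ ≤ R) {A : ℝ} (hA : (d : ℝ) < A) {ν : ℝ}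
    (hν : 0 < ν) (u : Fin d → ℝ) :
    ∑' m : Fin d → ℤ, (1 + ν * ‖B *ᵥ (fun i => (m i : ℝ)) - u‖) ^ (-A)
      ≤ 8 ^ d * ν ^ (-(d : ℝ)) * (1 - 2 ^ ((d : ℝ) - A))⁻¹ + (4 * R) ^ d * (1 - 2 ^ (-A))⁻¹ := by
  have hR : 0 ≤ R := (hcov 0).elim fun _ h => (norm_nonneg _).trans h.2
  have hA0 : 0 ≤ A := (Nat.cast_nonneg d).trans hA.le
  have hrs : (2 : ℝ) ^ (-A) * 2 ^ d = 2 ^ ((d : ℝ) - A) := by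
    rw [← Real.rpow_natCast, ← Real.rpow_add two_pos, neg_add_eq_sub]
  have hgeom := hasSum_geometric_mul_add (Real.rpow_nonneg zero_le_two (-A)) (by positivity)
    (hrs ▸ Real.rpow_lt_one_of_one_lt_of_neg one_lt_two (by linarith))
    (Real.rpow_lt_one_of_one_lt_of_neg one_lt_two (by linarith))
    (8 ^ d * ν ^ (-(d : ℝ))) ((4 * R) ^ d)
  rw [hrs] at hgeom
  -- bounding the finite partial sums suffices: summability is never needed
  refine tsum_le_of_sum_le' (hgeom.nonneg fun k => by positivity) fun S => ?_
  refine (S.sum_rpow_neg_le_tsum (fun m => ?_) hA0 (fun k => ?_) hgeom.summable).trans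
    hgeom.tsum_eq.le
  · have := norm_nonneg ((B *ᵥ (fun i => (m i : ℝ))) - u)
    nlinarith
  · have hρ : (0 : ℝ) ≤ 2 ^ (k + 1) / ν := by positivity
    have hcard := card_le_of_forall_norm_mulVec_sub_le hB hcov hρ
      {m ∈ S | 1 + ν * ‖B *ᵥ (fun i => (m i : ℝ)) - u‖ < 2 ^ (k + 1)} fun m hm => by
      rw [le_div_iff₀ hν]
      linarith [(mem_filter.1 hm).2]
    calc _ ≤ (2 * (2 ^ (k + 1) / ν + R)) ^ d := hcard
      _ = (2 * (2 ^ (k + 1) / ν) + 2 * R) ^ d := by ring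
      _ ≤ 2 ^ (d - 1) * ((2 * (2 ^ (k + 1) / ν)) ^ d + (2 * R) ^ d) :=
          add_pow_le (by positivity) (by positivity) d
      _ ≤ 2 ^ d * ((2 * (2 ^ (k + 1) / ν)) ^ d + (2 * R) ^ d) := by
          gcongr
          · exact one_le_two
          · exact Nat.sub_le d 1
      _ = (2 * (2 * (2 ^ (k + 1) / ν))) ^ d + (2 * (2 * R)) ^ d := by
          rw [mul_add, ← mul_pow, ← mul_pow]
      _ = 8 ^ d * ν ^ (-(d : ℝ)) * (2 ^ d) ^ k + (4 * R) ^ d := by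
          rw [Real.rpow_neg hν.le, Real.rpow_natCast, ← inv_pow, ← pow_mul, mul_comm d k, pow_mul,
            ← mul_pow, ← mul_pow]
          congr 2 <;> ring

theorem tsum_le_of_linearIndependent (hB : |B.det| = 1) {A : ℝ} (hA : (d : ℝ) < A) {ν : ℝ}
    (hν : 0 < ν) (u : Fin d → ℝ) {t : ℝ} (ht : 0 ≤ t) {v : Fin d → Fin d → ℝ}
    (hv : ∀ i, v i ∈ latticePts d B) (hli : LinearIndependent ℝ v) (hvt : ∀ i, ‖v i‖ ≤ t) :
    ∑' m : Fin d → ℤ, (1 + ν * ‖B *ᵥ (fun i => (m i : ℝ)) - u‖) ^ (-A)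
      ≤ latticeSumConst d A * (ν ^ (-(d : ℝ)) + t ^ d) := by
  have hcov (z : Fin d → ℝ) : ∃ γ ∈ latticePts d B, ‖z - γ‖ ≤ ∑ i, ‖v i‖ := by
    simp only [latticePts_eq_span, SetLike.mem_coe] at hv ⊢
    exact Submodule.exists_mem_norm_sub_le_sum_norm hv hli (by simp) z
  have hsum_norm : ∑ i, ‖v i‖ ≤ d * t := by
    simpa using Finset.sum_le_sum (s := univ) fun i _ => hvt i
  have h₁ := one_sub_two_rpow_pos (x := d - A) (by linarith)
  have h₂ := one_sub_two_rpow_pos (x := -A) (by linarith [Nat.cast_nonneg (α := ℝ) d])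
  calc _ ≤ _ := tsum_one_add_mul_norm_rpow_neg_le hB hcov hA hν u
    _ ≤ 8 ^ d * ν ^ (-(d : ℝ)) * (1 - 2 ^ ((d : ℝ) - A))⁻¹
          + (4 * d) ^ d * t ^ d * (1 - 2 ^ (-A))⁻¹ := by
        rw [← mul_pow, mul_assoc 4]
        gcongr
    _ ≤ latticeSumConst d A * (ν ^ (-(d : ℝ)) + t ^ d) := by
        have : 0 ≤ 8 ^ d * (1 - 2 ^ ((d : ℝ) - A))⁻¹ * t ^ d
            + (4 * d) ^ d * (1 - 2 ^ (-A))⁻¹ * ν ^ (-(d : ℝ)) := by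
          positivity
        unfold latticeSumConst
        linarith

end Lattice

theorem elementary_lattice_sum_bound_general (d : ℕ) (A : ℝ) (hA : (d : ℝ) < A) :
    ∃ c : ℝ, 0 < c ∧ ∀ B : Matrix (Fin d) (Fin d) ℝ, |B.det| = 1 →
      ∀ ν : ℝ, 0 < ν → ∀ u : Fin d → ℝ,
        ∑' m : Fin d → ℤ,
            (1 + ν * ‖(B.mulVec fun i => (m i : ℝ)) - u‖) ^ (-A)
          ≤ c * (ν ^ (-(d : ℝ)) + (succMin d B d) ^ d) := by
  refine ⟨latticeSumConst d A, latticeSumConst_pos hA, fun B hB ν hν u => ?_⟩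
  have hne : {t : ℝ | 0 ≤ t ∧ ∃ v : Fin d → (Fin d → ℝ),
      (∀ i, v i ∈ latticePts d B) ∧ LinearIndependent ℝ v ∧ ∀ i, ‖v i‖ ≤ t}.Nonempty :=
    ⟨∑ i, ‖B.col i‖, sum_nonneg fun i _ => norm_nonneg _, B.col,
      fun i => by rw [latticePts_eq_span]; exact subset_span (mem_range_self i),
      linearIndependent_cols_iff_isUnit.2 (isUnit_of_abs_det_eq_one hB),
      fun i => single_le_sum (fun j _ => norm_nonneg (B.col j)) (mem_univ i)⟩
  exact le_apply_csInf_of_forall_le hne ⟨0, fun t ht => ht.1⟩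
    (g := fun t => latticeSumConst d A * (ν ^ (-(d : ℝ)) + t ^ d)) (by fun_prop)
    fun t ⟨ht, v, hv, hli, hvt⟩ => tsum_le_of_linearIndependent hB hA hν u ht hv hli hvt

/-- For a unimodular lattice `Γ ⊂ ℝ^d`, `A > d` and `ν > 0`, the elementary lattice sum
`f_A(ν,Γ,u) = Σ_{x ∈ Γ} (1 + ν |x - u|_∞)^{-A}` is at most `c_A (ν^{-d} + λ_d(Γ)^d)`. -/
theorem elementary_lattice_sum_bound (d : ℕ) (hd : 0 < d) (A : ℝ) (hA : (d : ℝ) < A) :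
    ∃ c : ℝ, 0 < c ∧ ∀ B : Matrix (Fin d) (Fin d) ℝ, |B.det| = 1 →
      ∀ ν : ℝ, 0 < ν → ∀ u : Fin d → ℝ,
        ∑' m : Fin d → ℤ,
            (1 + ν * ‖(B.mulVec fun i => (m i : ℝ)) - u‖) ^ (-A)
          ≤ c * (ν ^ (-(d : ℝ)) + (succMin d B d) ^ d) :=
  elementary_lattice_sum_bound_general d A hA
end

section
/- Let θ be κ-multiplicatively approximable, let m(L) = (2^{−l₁−1},…,2^{−l_{d-1}−1}, μ(L)) for the dyadic minimum μ(L) of Λ_θ, with hyperbolic norm ν(m(L)) = (μ(L)·2^{1−d}·2^{−|L|₁})^{1/d} and equalizer D_{m(L)}. Then λ₁(D_{m(L)} Λ_θ)^d = ν(m(L))^d, i.e., the first minimum of the rescaled lattice in the sup norm equals the hyperbolic norm of m(L). -/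
open scoped BigOperators

/-- The first successive minimum (for the sup norm) of the lattice `D_{m(L)} Λ_θ`,
i.e. of `Λ_θ` rescaled coordinatewise by `δ_i = ν / m(L)_i` (the equalizer of `m(L)`).
Here `δ j = ν / 2^{-l_j-1}` for `j < n` and `δ_d = ν / μ(L)`. -/
noncomputable def firstMinScaled (n : ℕ) (θ : Fin n → ℝ) (L : Fin n → ℕ) (ν : ℝ) : ℝ :=
  sInf {t : ℝ | ∃ (M : Fin n → ℤ) (md : ℤ),
    ((fun j => (M j : ℝ)) ≠ 0 ∨ md ≠ 0) ∧
    ‖(Fin.snoc (fun j => (ν / (2 : ℝ) ^ (-(L j : ℝ) - 1)) * (θ j * (md : ℝ) - (M j : ℝ)))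
        ((ν / dyadicMin n θ L) * (md : ℝ)) : Fin (n + 1) → ℝ)‖ ≤ t}

/-- `distInt` is at most the distance to any integer. -/
lemma distInt_le_abs_sub_int (x : ℝ) (z : ℤ) : distInt x ≤ |x - z| :=
  round_le x z

/-- Pigeonhole: there is a nonzero integer `md` with all `distInt (θ j * md)` small. -/
lemma exists_approx (n : ℕ) (θ : Fin n → ℝ) (L : Fin n → ℕ) :
    ∃ md : ℤ, md ≠ 0 ∧ ∀ j, distInt (θ j * md) ≤ (2 : ℝ) ^ (-(L j : ℝ) - 1) := by
  classical
  set ε : Fin n → ℝ := fun j => (2 : ℝ) ^ (-(L j : ℝ) - 1) with hεdef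
  have hεpos : ∀ j, 0 < ε j := fun j => Real.rpow_pos_of_pos two_pos _
  set K : Fin n → ℕ := fun j => 2 ^ (L j + 1) with hKdef
  have hKε : ∀ j, (K j : ℝ) * ε j = 1 := by
    intro j
    have h1 : (K j : ℝ) = (2 : ℝ) ^ ((L j : ℝ) + 1) := by
      rw [hKdef]
      push_cast
      rw [← Real.rpow_natCast 2 (L j + 1)]
      push_cast
      ring_nf
    rw [h1, hεdef, ← Real.rpow_add two_pos]
    norm_num
  set N := ∏ j, K j with hN
  have hmaps : ∀ m ∈ Finset.range (N + 1),
      (fun j => ⌊Int.fract (θ j * m) / ε j⌋₊) ∈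
        Fintype.piFinset (fun j => Finset.range (K j)) := by
    intro m _
    rw [Fintype.mem_piFinset]
    intro j
    rw [Finset.mem_range, Nat.floor_lt (div_nonneg (Int.fract_nonneg _) (hεpos j).le), div_lt_iff₀ (hεpos j)]
    calc Int.fract (θ j * m) < 1 := Int.fract_lt_one _
      _ = K j * ε j := (hKε j).symm
  have hcard : (Fintype.piFinset (fun j => Finset.range (K j))).card <
      (Finset.range (N + 1)).card := by
    rw [Finset.card_range, Fintype.card_piFinset]
    simp only [Finset.card_range]
    omega
  obtain ⟨m1, _, m2, _, hne, heq⟩ :=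
    Finset.exists_ne_map_eq_of_card_lt_of_maps_to hcard hmaps
  refine ⟨(m1 : ℤ) - (m2 : ℤ), sub_ne_zero.mpr (by exact_mod_cast hne), ?_⟩
  intro j
  have hfloor := congrFun heq j
  set a := Int.fract (θ j * m1) with ha
  set b := Int.fract (θ j * m2) with hb
  have ha0 : 0 ≤ a := Int.fract_nonneg _
  have hb0 : 0 ≤ b := Int.fract_nonneg _
  set k := ⌊a / ε j⌋₊ with hk
  have hfk : ⌊b / ε j⌋₊ = k := by
    simpa [ha, hb, hk] using hfloor.symm
  have ha1 : (k : ℝ) * ε j ≤ a := by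
    rw [← le_div_iff₀ (hεpos j)]
    exact Nat.floor_le (div_nonneg (by assumption) (hεpos j).le)
  have ha2 : a < ((k : ℝ) + 1) * ε j := by
    rw [← div_lt_iff₀ (hεpos j)]
    exact_mod_cast Nat.lt_floor_add_one (a / ε j)
  have hb1 : (k : ℝ) * ε j ≤ b := by
    rw [← le_div_iff₀ (hεpos j), ← hfk]
    exact Nat.floor_le (div_nonneg (by assumption) (hεpos j).le)
  have hb2 : b < ((k : ℝ) + 1) * ε j := by
    rw [← div_lt_iff₀ (hεpos j), ← hfk]
    exact_mod_cast Nat.lt_floor_add_one (b / ε j)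
  have hab : |a - b| ≤ ε j := by
    rw [abs_sub_le_iff]
    constructor <;> nlinarith
  have key : θ j * (((m1 : ℤ) - (m2 : ℤ) : ℤ) : ℝ) - ((⌊θ j * m1⌋ - ⌊θ j * m2⌋ : ℤ) : ℝ)
      = a - b := by
    rw [ha, hb, Int.fract, Int.fract]
    push_cast
    ring
  calc distInt (θ j * (((m1 : ℤ) - (m2 : ℤ) : ℤ) : ℝ))
      ≤ |θ j * (((m1 : ℤ) - (m2 : ℤ) : ℤ) : ℝ) - ((⌊θ j * m1⌋ - ⌊θ j * m2⌋ : ℤ) : ℝ)| :=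
        distInt_le_abs_sub_int _ _
    _ = |a - b| := by rw [key]
    _ ≤ ε j := hab

/-- The dyadic minimum is attained, is at least 1, and is a lower bound. -/
lemma dyadicMin_spec (n : ℕ) (θ : Fin n → ℝ) (L : Fin n → ℕ) :
    (∃ md : ℤ, md ≠ 0 ∧ (∀ j, distInt (θ j * md) ≤ (2 : ℝ) ^ (-(L j : ℝ) - 1)) ∧
      |(md : ℝ)| = dyadicMin n θ L) ∧
    1 ≤ dyadicMin n θ L ∧
    ∀ md : ℤ, md ≠ 0 → (∀ j, distInt (θ j * md) ≤ (2 : ℝ) ^ (-(L j : ℝ) - 1)) →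
      dyadicMin n θ L ≤ |(md : ℝ)| := by
  classical
  set T := {t : ℝ | ∃ md : ℤ, md ≠ 0 ∧
    (∀ j, distInt (θ j * md) ≤ (2 : ℝ) ^ (-(L j : ℝ) - 1)) ∧ t = |(md : ℝ)|} with hT
  have hdm : dyadicMin n θ L = sInf T := rfl
  set A : Set ℕ := {m | ∃ md : ℤ, md ≠ 0 ∧
    (∀ j, distInt (θ j * md) ≤ (2 : ℝ) ^ (-(L j : ℝ) - 1)) ∧ md.natAbs = m} with hA
  obtain ⟨md1, h1, h2⟩ := exists_approx n θ L
  have hAne : A.Nonempty := ⟨md1.natAbs, md1, h1, h2, rfl⟩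
  obtain ⟨md0, hmd0, hC0, hnat⟩ := Nat.sInf_mem hAne
  have habs : ∀ md : ℤ, |(md : ℝ)| = (md.natAbs : ℝ) := by
    intro md
    rw [Nat.cast_natAbs, Int.cast_abs]
  have hbdd : BddBelow T := ⟨0, by rintro t ⟨md, _, _, rfl⟩; positivity⟩
  have hmemT : ((sInf A : ℕ) : ℝ) ∈ T := by
    rw [hT]
    exact ⟨md0, hmd0, hC0, by rw [habs, hnat]⟩
  have hlbT : ∀ t ∈ T, ((sInf A : ℕ) : ℝ) ≤ t := by
    rintro t ⟨md, hmd, hC, rfl⟩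
    rw [habs]
    have hmem : md.natAbs ∈ A := by rw [hA]; exact ⟨md, hmd, hC, rfl⟩
    exact_mod_cast Nat.sInf_le hmem
  have heq : dyadicMin n θ L = ((sInf A : ℕ) : ℝ) := by
    rw [hdm]
    exact le_antisymm (csInf_le hbdd hmemT) (le_csInf ⟨_, hmemT⟩ hlbT)
  have hpos : 1 ≤ sInf A := by
    have : 0 < md0.natAbs := Int.natAbs_pos.mpr hmd0
    omega
  refine ⟨⟨md0, hmd0, hC0, by rw [habs, hnat, heq]⟩, ?_, ?_⟩
  · rw [heq]
    exact_mod_cast hpos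
  · intro md hmd hC
    rw [hdm]
    exact csInf_le hbdd ⟨md, hmd, hC, rfl⟩

/-- For any positive `ν`, the scaled first minimum equals `ν`. -/
lemma firstMinScaled_eq (n : ℕ) (θ : Fin n → ℝ) (L : Fin n → ℕ) (ν : ℝ) (hν : 0 < ν) :
    firstMinScaled n θ L ν = ν := by
  classical
  obtain ⟨⟨md0, hmd0, hC0, hval⟩, hμ1, hlb⟩ := dyadicMin_spec n θ L
  set μ := dyadicMin n θ L with hμ
  have hμpos : (0 : ℝ) < μ := lt_of_lt_of_le one_pos hμ1
  have hεpos : ∀ j, (0 : ℝ) < (2 : ℝ) ^ (-(L j : ℝ) - 1) :=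
    fun j => Real.rpow_pos_of_pos two_pos _
  have hεlt1 : ∀ j, (2 : ℝ) ^ (-(L j : ℝ) - 1) < 1 := by
    intro j
    apply Real.rpow_lt_one_of_one_lt_of_neg one_lt_two
    have : (0 : ℝ) ≤ (L j : ℝ) := Nat.cast_nonneg _
    linarith
  set S := {t : ℝ | ∃ (M : Fin n → ℤ) (md : ℤ),
    ((fun j => (M j : ℝ)) ≠ 0 ∨ md ≠ 0) ∧
    ‖(Fin.snoc (fun j => (ν / (2 : ℝ) ^ (-(L j : ℝ) - 1)) * (θ j * (md : ℝ) - (M j : ℝ)))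
        ((ν / dyadicMin n θ L) * (md : ℝ)) : Fin (n + 1) → ℝ)‖ ≤ t} with hS
  have hfm : firstMinScaled n θ L ν = sInf S := rfl
  -- ν belongs to S
  have hmemS : ν ∈ S := by
    refine ⟨fun j => round (θ j * (md0 : ℝ)), md0, Or.inr hmd0, ?_⟩
    rw [pi_norm_le_iff_of_nonneg hν.le]
    intro i
    induction i using Fin.lastCases with
    | last =>
      rw [Fin.snoc_last, Real.norm_eq_abs, abs_mul, abs_of_pos (div_pos hν hμpos), hval]
      rw [div_mul_cancel₀ _ (ne_of_gt hμpos)]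
    | cast j =>
      rw [Fin.snoc_castSucc, Real.norm_eq_abs, abs_mul,
        abs_of_pos (div_pos hν (hεpos j))]
      have h1 : |θ j * (md0 : ℝ) - (round (θ j * (md0 : ℝ)) : ℝ)| ≤ (2 : ℝ) ^ (-(L j : ℝ) - 1) :=
        hC0 j
      calc ν / (2 : ℝ) ^ (-(L j : ℝ) - 1) * |θ j * (md0 : ℝ) - (round (θ j * (md0 : ℝ)) : ℝ)|
          ≤ ν / (2 : ℝ) ^ (-(L j : ℝ) - 1) * (2 : ℝ) ^ (-(L j : ℝ) - 1) := by
            apply mul_le_mul_of_nonneg_left h1 (le_of_lt (div_pos hν (hεpos j)))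
        _ = ν := div_mul_cancel₀ _ (ne_of_gt (hεpos j))
  -- ν is a lower bound of S
  have hlbS : ∀ t ∈ S, ν ≤ t := by
    rintro t ⟨M, md, hnz, hle⟩
    by_contra h
    push_neg at h
    set v : Fin (n + 1) → ℝ :=
      Fin.snoc (fun j => (ν / (2 : ℝ) ^ (-(L j : ℝ) - 1)) * (θ j * (md : ℝ) - (M j : ℝ)))
        ((ν / dyadicMin n θ L) * (md : ℝ)) with hv
    have hcoord : ∀ i, |v i| < ν := by
      intro i
      calc |v i| = ‖v i‖ := (Real.norm_eq_abs _).symm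
        _ ≤ ‖v‖ := norm_le_pi_norm v i
        _ ≤ t := hle
        _ < ν := h
    have hlast := hcoord (Fin.last n)
    rw [hv, Fin.snoc_last, abs_mul, abs_of_pos (div_pos hν hμpos)] at hlast
    have hmdlt : |(md : ℝ)| < μ := by
      by_contra hge
      push_neg at hge
      have h2 : ν / μ * μ ≤ ν / μ * |(md : ℝ)| :=
        mul_le_mul_of_nonneg_left hge (div_pos hν hμpos).le
      rw [div_mul_cancel₀ _ (ne_of_gt hμpos)] at h2
      linarith
    rcases eq_or_ne md 0 with hmd | hmd
    · -- md = 0 : some M j nonzero gives big coordinate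
      rcases hnz with hM | hmd'
      · obtain ⟨j, hMj⟩ := Function.ne_iff.mp hM
        have hMj' : (1 : ℝ) ≤ |(M j : ℝ)| := by
          have : M j ≠ 0 := by
            intro hz
            apply hMj
            rw [hz]
            norm_num
          exact_mod_cast Int.one_le_abs this
        have hj := hcoord (Fin.castSucc j)
        rw [hv, Fin.snoc_castSucc, abs_mul, abs_of_pos (div_pos hν (hεpos j)), hmd] at hj
        have hgt : ν < ν / (2 : ℝ) ^ (-(L j : ℝ) - 1) * |θ j * ((0 : ℤ) : ℝ) - (M j : ℝ)| := by
          have habs0 : |θ j * ((0 : ℤ) : ℝ) - (M j : ℝ)| = |(M j : ℝ)| := by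
            norm_num
          rw [habs0]
          have h2 : ν < ν / (2 : ℝ) ^ (-(L j : ℝ) - 1) := by
            rw [lt_div_iff₀ (hεpos j)]
            nlinarith [hεlt1 j]
          calc ν < ν / (2 : ℝ) ^ (-(L j : ℝ) - 1) := h2
            _ = ν / (2 : ℝ) ^ (-(L j : ℝ) - 1) * 1 := (mul_one _).symm
            _ ≤ ν / (2 : ℝ) ^ (-(L j : ℝ) - 1) * |(M j : ℝ)| := by
                apply mul_le_mul_of_nonneg_left hMj' (le_of_lt (div_pos hν (hεpos j)))
        exact absurd (hj.trans hgt) (lt_irrefl _)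
      · exact hmd' hmd
    · -- md ≠ 0 : contradiction with minimality of μ
      have hC : ∀ j, distInt (θ j * (md : ℝ)) ≤ (2 : ℝ) ^ (-(L j : ℝ) - 1) := by
        intro j
        have hj := hcoord (Fin.castSucc j)
        rw [hv, Fin.snoc_castSucc, abs_mul, abs_of_pos (div_pos hν (hεpos j))] at hj
        have hsmall : |θ j * (md : ℝ) - (M j : ℝ)| < (2 : ℝ) ^ (-(L j : ℝ) - 1) := by
          by_contra hge
          push_neg at hge
          have h2 : ν / (2 : ℝ) ^ (-(L j : ℝ) - 1) * (2 : ℝ) ^ (-(L j : ℝ) - 1) ≤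
              ν / (2 : ℝ) ^ (-(L j : ℝ) - 1) * |θ j * (md : ℝ) - (M j : ℝ)| :=
            mul_le_mul_of_nonneg_left hge (div_pos hν (hεpos j)).le
          rw [div_mul_cancel₀ _ (ne_of_gt (hεpos j))] at h2
          linarith
        exact le_of_lt (lt_of_le_of_lt (distInt_le_abs_sub_int _ (M j)) hsmall)
      have := hlb md hmd hC
      linarith
  rw [hfm]
  exact le_antisymm (csInf_le ⟨ν, hlbS⟩ hmemS) (le_csInf ⟨ν, hmemS⟩ hlbS)

theorem firstMin_of_scaled_lattice (n : ℕ) (hn : 1 ≤ n) (θ : Fin n → ℝ)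
    (hθ : ∀ j, Irrational (θ j)) (κ c : ℝ) (hκ : 0 < κ) (hc : 0 < c)
    (happrox : ∀ m : ℕ, 0 < m → c ≤ (m : ℝ) ^ (1 + κ) * ∏ j, distInt (θ j * m))
    (L : Fin n → ℕ) :
    (firstMinScaled n θ L
        ((dyadicMin n θ L * ∏ j, (2 : ℝ) ^ (-(L j : ℝ) - 1)) ^ ((1 : ℝ) / (n + 1))))
      ^ (n + 1)
    = dyadicMin n θ L * ∏ j, (2 : ℝ) ^ (-(L j : ℝ) - 1) := by
  obtain ⟨_, hμ1, _⟩ := dyadicMin_spec n θ L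
  have hμpos : (0 : ℝ) < dyadicMin n θ L := lt_of_lt_of_le one_pos hμ1
  have hPpos : (0 : ℝ) < ∏ j, (2 : ℝ) ^ (-(L j : ℝ) - 1) := by
    apply Finset.prod_pos
    intro j _
    exact Real.rpow_pos_of_pos two_pos _
  have hbase : (0 : ℝ) < dyadicMin n θ L * ∏ j, (2 : ℝ) ^ (-(L j : ℝ) - 1) :=
    mul_pos hμpos hPpos
  have hνpos : (0 : ℝ) <
      (dyadicMin n θ L * ∏ j, (2 : ℝ) ^ (-(L j : ℝ) - 1)) ^ ((1 : ℝ) / (n + 1)) :=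
    Real.rpow_pos_of_pos hbase _
  rw [firstMinScaled_eq n θ L _ hνpos]
  rw [← Real.rpow_natCast
    ((dyadicMin n θ L * ∏ j, (2 : ℝ) ^ (-(L j : ℝ) - 1)) ^ ((1 : ℝ) / (n + 1))) (n + 1)]
  rw [← Real.rpow_mul hbase.le]
  rw [one_div]
  push_cast
  rw [inv_mul_cancel₀ (by positivity : ((n : ℝ) + 1) ≠ 0), Real.rpow_one]
end

section
/- Let κ > 0, a > κ, s ≥ 1 an integer, and d ≥ 2. Then Σ_{n ≥ 0} 2^{κn/(κ+1)} · (n+1)^{p} (s+n)^{q} s / (1 + 2^{(n−s)/(κ+1)})^{a} ≪ 2^{κs/(κ+1)} s^{d-1} whenever p + q ≤ d − 2, with implied constant depending only on κ, a, d. -/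
/-!
Put `x = 2^((n - s)/(κ+1))`, so that `2^(κn/(κ+1)) = 2^(κs/(κ+1)) x^κ`. The factor
`x^κ / (1 + x)^a` is at most `x^κ` for `n ≤ s` and at most `x^(κ-a)` for `n ≥ s`, hence decays
geometrically in `|n - s|` because `0 < κ < a`. The polynomial factor is at most
`2^(d-2) s^(d-1) (|n - s| + 1)^(d-2)`, since `s + n ≤ 2s(|n - s| + 1)`. The sum is therefore
dominated by `2^(κs/(κ+1)) s^(d-1)` times a convergent sum, over `k = n - s ∈ ℤ`, of
`(|k| + 1)^(d-2) ρ^|k|` with `ρ < 1` depending only on `κ` and `a`.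
-/

open Real

lemma summable_add_one_pow_mul_geometric {ρ : ℝ} (h0 : 0 < ρ) (h1 : ρ < 1) (e : ℕ) :
    Summable fun n : ℕ => ((n : ℝ) + 1) ^ e * ρ ^ n := by
  have hshift : Summable fun n : ℕ => ((n + 1 : ℕ) : ℝ) ^ e * ρ ^ (n + 1) :=
    (summable_nat_add_iff 1).mpr <|
      summable_pow_mul_geometric_of_norm_lt_one (R := ℝ) e (by rwa [norm_of_nonneg h0.le])
  refine (hshift.mul_left ρ⁻¹).congr fun n => ?_
  field_simp
  push_cast
  ring

def polyGeomWeight (e : ℕ) (ρ : ℝ) (k : ℤ) : ℝ := ((k.natAbs : ℝ) + 1) ^ e * ρ ^ k.natAbs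

lemma polyGeomWeight_nonneg {ρ : ℝ} (h0 : 0 ≤ ρ) (e : ℕ) (k : ℤ) :
    0 ≤ polyGeomWeight e ρ k := by
  unfold polyGeomWeight; positivity

lemma summable_polyGeomWeight {ρ : ℝ} (h0 : 0 < ρ) (h1 : ρ < 1) (e : ℕ) :
    Summable (polyGeomWeight e ρ) :=
  have h := summable_add_one_pow_mul_geometric h0 h1 e
  .of_nat_of_neg (by simpa [polyGeomWeight] using h) (by simpa [polyGeomWeight] using h)

lemma tsum_polyGeomWeight_pos {ρ : ℝ} (h0 : 0 < ρ) (h1 : ρ < 1) (e : ℕ) :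
    0 < ∑' k, polyGeomWeight e ρ k :=
  (summable_polyGeomWeight h0 h1 e).tsum_pos (polyGeomWeight_nonneg h0.le e) 0
    (by simp [polyGeomWeight])

lemma summable_and_tsum_le_of_le_shift {f : ℕ → ℝ} {g : ℤ → ℝ} {K : ℝ} (hg : Summable g)
    (hg0 : ∀ k, 0 ≤ g k) (hf0 : ∀ n, 0 ≤ f n) (hK : 0 ≤ K) (s : ℕ)
    (hfg : ∀ n, f n ≤ K * g (n - s)) : Summable f ∧ ∑' n, f n ≤ K * ∑' k, g k := by
  have hinj : Function.Injective fun n : ℕ => (n : ℤ) - s := fun _ _ h => by simpa using h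
  have hgs : Summable fun n : ℕ => g (n - s) := hg.comp_injective hinj
  have hf : Summable f := .of_nonneg_of_le hf0 hfg (hgs.mul_left K)
  refine ⟨hf, ?_⟩
  calc ∑' n, f n ≤ ∑' n : ℕ, K * g (n - s) := hf.tsum_le_tsum hfg (hgs.mul_left K)
    _ = K * ∑' n : ℕ, g (n - s) := tsum_mul_left
    _ ≤ K * ∑' k, g k := by
      gcongr
      exact hgs.tsum_le_tsum_of_inj _ hinj (fun k _ => hg0 k) (fun _ => le_rfl) hg

lemma add_le_two_mul_mul_natAbs_sub_add_one {s n : ℕ} (hs : 1 ≤ s) :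
    s + n ≤ 2 * s * (((n : ℤ) - s).natAbs + 1) := by
  have hn : n ≤ s + ((n : ℤ) - s).natAbs := by omega
  generalize ((n : ℤ) - s).natAbs = k at hn ⊢
  nlinarith [Nat.mul_le_mul_right k hs]

lemma add_one_pow_mul_add_pow_mul_le {s n p q e : ℕ} (hs : 1 ≤ s) (hpq : p + q ≤ e) :
    ((n : ℝ) + 1) ^ p * ((s : ℝ) + n) ^ q * s ≤
      2 ^ e * (s : ℝ) ^ (e + 1) * ((((n : ℤ) - s).natAbs : ℝ) + 1) ^ e := by
  have hn : (n : ℝ) + 1 ≤ s + n := by norm_cast; omega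
  have hsn : (s : ℝ) + n ≤ 2 * s * ((((n : ℤ) - s).natAbs : ℝ) + 1) := by
    exact_mod_cast add_le_two_mul_mul_natAbs_sub_add_one hs
  calc ((n : ℝ) + 1) ^ p * ((s : ℝ) + n) ^ q * s
      ≤ ((s : ℝ) + n) ^ p * ((s : ℝ) + n) ^ q * s := by gcongr ?_ ^ _ * _ * _
    _ ≤ ((s : ℝ) + n) ^ e * s := by rw [← pow_add]; gcongr; linarith
    _ ≤ (2 * s * ((((n : ℤ) - s).natAbs : ℝ) + 1)) ^ e * s := by gcongr
    _ = _ := by rw [mul_pow, mul_pow, pow_succ]; ring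

lemma rpow_mul_div_one_add_rpow_le {b y κ a c : ℝ} (hb : 1 ≤ b) (hc : 0 ≤ c) (hcκ : c ≤ κ)
    (hca : c ≤ a - κ) : b ^ (κ * y) / (1 + b ^ y) ^ a ≤ b ^ (-(c * |y|)) := by
  have hb0 : 0 < b := by linarith
  have hby : 0 < b ^ y := rpow_pos_of_pos hb0 y
  rcases le_total y 0 with hy | hy
  · have hden : 1 ≤ (1 + b ^ y) ^ a := one_le_rpow (by linarith) (by linarith)
    calc b ^ (κ * y) / (1 + b ^ y) ^ a ≤ b ^ (κ * y) := div_le_self (by positivity) hden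
      _ ≤ b ^ (-(c * |y|)) := by
        rw [abs_of_nonpos hy]; exact rpow_le_rpow_of_exponent_le hb (by nlinarith)
  · calc b ^ (κ * y) / (1 + b ^ y) ^ a ≤ b ^ (κ * y) / (b ^ y) ^ a := by
          gcongr
          · linarith
          · linarith
      _ = b ^ (κ * y - y * a) := by rw [rpow_sub hb0, ← rpow_mul hb0.le]
      _ ≤ b ^ (-(c * |y|)) := by
        rw [abs_of_nonneg hy]; exact rpow_le_rpow_of_exponent_le hb (by nlinarith)

lemma two_rpow_div_one_add_two_rpow_le {κ a : ℝ} (hκ : 0 ≤ κ) (ha : κ ≤ a) (s n : ℕ) :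
    (2 : ℝ) ^ (κ * n / (κ + 1)) / (1 + (2 : ℝ) ^ (((n : ℝ) - s) / (κ + 1))) ^ a ≤
      (2 : ℝ) ^ (κ * s / (κ + 1)) *
        ((2 : ℝ) ^ (-min κ (a - κ) / (κ + 1))) ^ ((n : ℤ) - s).natAbs := by
  have hκ1 : 0 < κ + 1 := by linarith
  set y := ((n : ℝ) - s) / (κ + 1)
  have hsplit : (2 : ℝ) ^ (κ * n / (κ + 1)) = 2 ^ (κ * s / (κ + 1)) * 2 ^ (κ * y) := by
    rw [← rpow_add two_pos]; congr 1; simp only [y]; field_simp; ring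
  have hgeom : ((2 : ℝ) ^ (-min κ (a - κ) / (κ + 1))) ^ ((n : ℤ) - s).natAbs =
      2 ^ (-(min κ (a - κ) * |y|)) := by
    rw [← rpow_natCast, ← rpow_mul two_pos.le, Nat.cast_natAbs, Int.cast_abs, abs_div,
      abs_of_pos hκ1]
    push_cast
    ring_nf
  rw [hsplit, mul_div_assoc, hgeom]
  gcongr
  exact rpow_mul_div_one_add_rpow_le one_le_two (le_min hκ (sub_nonneg.2 ha)) (min_le_left _ _)
    (min_le_right _ _)

lemma summand_le_polyGeomWeight {κ a : ℝ} (hκ : 0 ≤ κ) (ha : κ ≤ a) {s p q e : ℕ} (hs : 1 ≤ s)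
    (hpq : p + q ≤ e) (n : ℕ) :
    (2 : ℝ) ^ (κ * n / (κ + 1)) * (n + 1 : ℝ) ^ p * ((s : ℝ) + n) ^ q * (s : ℝ) /
        (1 + (2 : ℝ) ^ (((n : ℝ) - s) / (κ + 1))) ^ a ≤
      2 ^ e * (2 : ℝ) ^ (κ * s / (κ + 1)) * (s : ℝ) ^ (e + 1) *
        polyGeomWeight e (2 ^ (-min κ (a - κ) / (κ + 1))) (n - s) := by
  calc (2 : ℝ) ^ (κ * n / (κ + 1)) * (n + 1 : ℝ) ^ p * ((s : ℝ) + n) ^ q * (s : ℝ) /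
        (1 + (2 : ℝ) ^ (((n : ℝ) - s) / (κ + 1))) ^ a
      = ((n + 1 : ℝ) ^ p * ((s : ℝ) + n) ^ q * s) *
          ((2 : ℝ) ^ (κ * n / (κ + 1)) / (1 + (2 : ℝ) ^ (((n : ℝ) - s) / (κ + 1))) ^ a) := by
        ring
    _ ≤ (2 ^ e * (s : ℝ) ^ (e + 1) * ((((n : ℤ) - s).natAbs : ℝ) + 1) ^ e) *
          ((2 : ℝ) ^ (κ * s / (κ + 1)) *
            ((2 : ℝ) ^ (-min κ (a - κ) / (κ + 1))) ^ ((n : ℤ) - s).natAbs) := by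
        gcongr ?_ * ?_
        · exact add_one_pow_mul_add_pow_mul_le hs hpq
        · exact two_rpow_div_one_add_two_rpow_le hκ ha s n
    _ = _ := by unfold polyGeomWeight; ring

/-- The combined estimate for the final sums:
`Σ_{n≥0} 2^{κn/(κ+1)} (n+1)^p (s+n)^q s / (1+2^{(n-s)/(κ+1)})^a ≪ 2^{κs/(κ+1)} s^{d-1}`
for `p + q ≤ d - 2`, with implied constant depending only on `κ, a, d`. -/
theorem final_sum_estimate (κ a : ℝ) (d : ℕ) (hκ : 0 < κ) (ha : κ < a) (hd : 2 ≤ d) :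
    ∃ C : ℝ, 0 < C ∧ ∀ s : ℕ, 1 ≤ s → ∀ p q : ℕ, p + q ≤ d - 2 →
      Summable (fun m : ℕ =>
        (2 : ℝ) ^ (κ * m / (κ + 1)) * (m + 1 : ℝ) ^ p * ((s : ℝ) + m) ^ q * (s : ℝ) /
          (1 + (2 : ℝ) ^ (((m : ℝ) - s) / (κ + 1))) ^ a) ∧
      (∑' m : ℕ,
        (2 : ℝ) ^ (κ * m / (κ + 1)) * (m + 1 : ℝ) ^ p * ((s : ℝ) + m) ^ q * (s : ℝ) /
          (1 + (2 : ℝ) ^ (((m : ℝ) - s) / (κ + 1))) ^ a)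
        ≤ C * (2 : ℝ) ^ (κ * s / (κ + 1)) * (s : ℝ) ^ (d - 1) := by
  set ρ : ℝ := 2 ^ (-min κ (a - κ) / (κ + 1))
  have hρ0 : 0 < ρ := rpow_pos_of_pos two_pos _
  have hρ1 : ρ < 1 := rpow_lt_one_of_one_lt_of_neg one_lt_two <|
    div_neg_of_neg_of_pos (neg_neg_of_pos (lt_min hκ (sub_pos.2 ha))) (by linarith)
  refine ⟨2 ^ (d - 2) * ∑' k, polyGeomWeight (d - 2) ρ k,
    mul_pos (by positivity) (tsum_polyGeomWeight_pos hρ0 hρ1 _), fun s hs p q hpq => ?_⟩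
  obtain ⟨hsum, hle⟩ := summable_and_tsum_le_of_le_shift (summable_polyGeomWeight hρ0 hρ1 _)
    (polyGeomWeight_nonneg hρ0.le _) (fun n => by positivity) (by positivity) s
    (summand_le_polyGeomWeight hκ.le ha.le hs hpq)
  refine ⟨hsum, hle.trans_eq ?_⟩
  rw [show d - 2 + 1 = d - 1 by omega]
  ring
end
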